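/- arXiv:2009.07370 — 2 statements merged into one kernel-verified Lean document; each statement's English description precedes it below -/
import Mathlib

section
/- Define s_n := 1 + ∑_{m=1}^{n−1} ⌈m/2⌉·(m+2)! and let 0 < ξ_k ≤ ξ₁ be decreasing. Then for n ≥ 8, 3(n−7)ξ_{n+2}² ≤ 4∑_{k≥1} ξ_k² sin²(s_n π/k!) < 4(n+2)ξ₁² + π²ξ_{n+3}²/((n+3)² − 1). In particular, if ξ_k ≡ 1, then 4∑_{k≥1} sin²(s_n π/k!) → ∞ and grows like Θ(n). -/
/-!
Since `(p + 2)!` divides `s q - s p` for `p ≤ q`, the angle `s n π / (k + 1)!` agrees modulo `π`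
with `s (k - 1) π / (k + 1)!` whenever `k ≤ n`, and `(k + 1)! / 3 ≤ s (k - 1) < (k + 1)! / 2`
once `k ≥ 5`. So the `n - 4` terms with `5 ≤ k ≤ n` all have `sin² ≥ 3/4`: the lower bound.

For the upper bound, the first `n + 2` terms are at most `ξ 0 ^ 2` each; beyond them
`sin² x ≤ x²`, `2 s n < (n + 2)!` and `(n + 2)! (n + 3)^j ≤ (n + 2 + j)!` bound the tail by a
geometric series of ratio `(n + 3)⁻²`.
-/

open Real Nat

noncomputable def s (n : ℕ) : ℤ :=
  1 + ∑ m ∈ Finset.Icc 1 (n - 1), ⌈(m : ℚ) / 2⌉ * ((m + 2)! : ℤ)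

open Finset

lemma le_two_mul_ceil_half (m : ℕ) : (m : ℤ) ≤ 2 * ⌈(m : ℚ) / 2⌉ := by
  have h := Int.le_ceil ((m : ℚ) / 2)
  exact_mod_cast (by linarith : (m : ℚ) ≤ 2 * ⌈(m : ℚ) / 2⌉)

lemma two_mul_ceil_half_le (m : ℕ) : 2 * ⌈(m : ℚ) / 2⌉ ≤ m + 1 := by
  have h := Int.ceil_lt_add_one ((m : ℚ) / 2)
  have : 2 * ⌈(m : ℚ) / 2⌉ < (m : ℤ) + 2 := by
    exact_mod_cast (by linarith : 2 * (⌈(m : ℚ) / 2⌉ : ℚ) < m + 2)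
  omega

lemma s_succ (n : ℕ) : s (n + 1) = s n + ⌈(n : ℚ) / 2⌉ * ((n + 2)! : ℤ) := by
  rcases n with _ | n
  · simp [s]
  · simp only [s, Nat.add_sub_cancel, sum_Icc_succ_top (Nat.le_add_left 1 n)]
    push_cast
    ring

lemma s_nonneg (n : ℕ) : 0 ≤ s n := by
  induction n with
  | zero => simp [s]
  | succ n ih =>
    rw [s_succ]
    positivity

lemma factorial_dvd_s_sub {p q : ℕ} (hpq : p ≤ q) : ((p + 2)! : ℤ) ∣ s q - s p := by
  induction q, hpq using Nat.le_induction with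
  | base => simp
  | succ q hpq ih =>
    rw [s_succ, add_sub_right_comm]
    exact ih.add <| (Int.natCast_dvd_natCast.2 (factorial_dvd_factorial (by omega))).mul_left _

lemma two_mul_s_lt_factorial {m : ℕ} (hm : 1 ≤ m) : 2 * s m < ((m + 2)! : ℤ) := by
  induction m, hm using Nat.le_induction with
  | base => simp [s, factorial]
  | succ m _ ih =>
    have hc := two_mul_ceil_half_le m
    have hF : (0 : ℤ) < (m + 2)! := mod_cast factorial_pos _
    rw [s_succ, factorial_succ (m + 2)]
    push_cast
    nlinarith

lemma factorial_le_three_mul_s {m : ℕ} (hm : 4 ≤ m) : ((m + 2)! : ℤ) ≤ 3 * s m := by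
  induction m, hm using Nat.le_induction with
  | base => simp [s, sum_Icc_succ_top, factorial]; norm_num
  | succ m hm ih =>
    have hc : (m : ℤ) + 2 ≤ 3 * ⌈(m : ℚ) / 2⌉ := by have := le_two_mul_ceil_half m; omega
    have hF : (0 : ℤ) < (m + 2)! := mod_cast factorial_pos _
    rw [s_succ, factorial_succ (m + 2)]
    push_cast
    nlinarith

lemma sin_sq_add_int_mul_pi (x : ℝ) (M : ℤ) : sin (x + M * π) ^ 2 = sin x ^ 2 := by
  rw [sin_add_int_mul_pi, mul_pow, ← sq_abs ((-1 : ℝ) ^ M), abs_neg_one_zpow, one_pow, one_mul]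

lemma three_quarters_le_sin_sq {x : ℝ} (h₁ : π / 3 ≤ x) (h₂ : x ≤ π / 2) :
    3 / 4 ≤ sin x ^ 2 := by
  have hcos₀ : 0 ≤ cos x := cos_nonneg_of_mem_Icc ⟨by linarith [pi_pos], h₂⟩
  have hcos : cos x ≤ 1 / 2 :=
    cos_pi_div_three ▸ cos_le_cos_of_nonneg_of_le_pi (by positivity) (by linarith [pi_pos]) h₁
  nlinarith [sin_sq_add_cos_sq x]

lemma sin_sq_s_div_factorial_of_le {p q : ℕ} (hpq : p ≤ q) :
    sin (s q * π / (p + 2)!) ^ 2 = sin (s p * π / (p + 2)!) ^ 2 := by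
  obtain ⟨M, hM⟩ := factorial_dvd_s_sub hpq
  have hF : ((p + 2)! : ℝ) ≠ 0 := mod_cast factorial_ne_zero _
  have hsq : (s q : ℝ) = s p + (p + 2)! * M := by
    exact_mod_cast (by linarith : s q = s p + (p + 2)! * M)
  have hangle : (s q : ℝ) * π / (p + 2)! = s p * π / (p + 2)! + M * π := by
    rw [hsq]; field_simp
  rw [hangle, sin_sq_add_int_mul_pi]

lemma three_quarters_le_sin_sq_s_div_factorial {p q : ℕ} (hp : 4 ≤ p) (hpq : p ≤ q) :
    3 / 4 ≤ sin (s q * π / (p + 2)!) ^ 2 := by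
  have hF : (0 : ℝ) < (p + 2)! := mod_cast factorial_pos _
  have hlo : ((p + 2)! : ℝ) ≤ 3 * s p := mod_cast factorial_le_three_mul_s hp
  have hhi : 2 * (s p : ℝ) < (p + 2)! := mod_cast two_mul_s_lt_factorial (by omega)
  rw [sin_sq_s_div_factorial_of_le hpq]
  apply three_quarters_le_sin_sq
  · rw [le_div_iff₀ hF]; nlinarith [pi_pos]
  · rw [div_le_iff₀ hF]; nlinarith [pi_pos]

lemma sin_sq_div_factorial_add_le (x : ℝ) (m j : ℕ) :
    sin (x / (m + j)!) ^ 2 ≤ (x / m !) ^ 2 * ((m + 1 : ℝ) ^ 2)⁻¹ ^ j := by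
  have hfac : (m ! * (m + 1) ^ j : ℝ) ≤ (m + j)! := mod_cast factorial_mul_pow_le_factorial
  have hpos : (0 : ℝ) < m ! * (m + 1) ^ j := by positivity
  calc sin (x / (m + j)!) ^ 2 ≤ (x / (m + j)!) ^ 2 := sin_sq_le_sq
    _ = x ^ 2 / ((m + j)! : ℝ) ^ 2 := div_pow _ _ _
    _ ≤ x ^ 2 / (m ! * (m + 1) ^ j) ^ 2 := by gcongr
    _ = (x / m !) ^ 2 * ((m + 1 : ℝ) ^ 2)⁻¹ ^ j := by
      rw [inv_pow, ← pow_mul, mul_comm 2 j, pow_mul]; field_simp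

lemma tsum_inv_pow_succ {a : ℝ} (ha : 1 < a) : ∑' i : ℕ, a⁻¹ ^ (i + 1) = (a - 1)⁻¹ := by
  have h₀ : 0 ≤ a⁻¹ := by positivity
  simp_rw [pow_succ, tsum_mul_right, tsum_geometric_of_lt_one h₀ (inv_lt_one_of_one_lt₀ ha)]
  field_simp

section

variable {ξ : ℕ → ℝ}

lemma summable_sq_mul_sin_sq_div_factorial {B : ℝ} (hξ : ∀ k, ξ k ^ 2 ≤ B) (x : ℝ) :
    Summable fun k : ℕ => ξ k ^ 2 * sin (x / (k + 1)!) ^ 2 := by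
  have hgeo := summable_geometric_of_lt_one (by norm_num) (by norm_num : ((1 + 1 : ℝ) ^ 2)⁻¹ < 1)
  refine .of_nonneg_of_le (fun k => by positivity) (fun k => ?_) (hgeo.mul_left (B * (x / 1 !) ^ 2))
  have h := sin_sq_div_factorial_add_le x 1 k
  rw [add_comm 1 k] at h
  push_cast at h ⊢
  rw [mul_assoc]
  exact mul_le_mul (hξ k) h (by positivity) ((sq_nonneg _).trans (hξ k))

lemma tsum_sq_mul_sin_sq_div_factorial_tail_le (hξ : Antitone ξ) (hξ0 : ∀ k, 0 ≤ ξ k)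
    (x : ℝ) {m : ℕ} (hm : 1 ≤ m) :
    ∑' i : ℕ, ξ (i + m) ^ 2 * sin (x / (i + m + 1)!) ^ 2
      ≤ ξ m ^ 2 * (x / m !) ^ 2 / (((m : ℝ) + 1) ^ 2 - 1) := by
  set r : ℝ := (((m : ℝ) + 1) ^ 2)⁻¹
  have ha : (1 : ℝ) < ((m : ℝ) + 1) ^ 2 := by
    have : (1 : ℝ) ≤ m := mod_cast hm
    nlinarith
  have hbound : ∀ i : ℕ, ξ (i + m) ^ 2 * sin (x / (i + m + 1)!) ^ 2
      ≤ ξ m ^ 2 * (x / m !) ^ 2 * r ^ (i + 1) := by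
    intro i
    have h := sin_sq_div_factorial_add_le x m (i + 1)
    rw [show m + (i + 1) = i + m + 1 by ring] at h
    rw [mul_assoc]
    exact mul_le_mul (pow_le_pow_left₀ (hξ0 _) (hξ (by omega)) 2) h (by positivity)
      (sq_nonneg _)
  have hgeo : Summable fun i : ℕ => r ^ (i + 1) :=
    (summable_nat_add_iff 1).2 <|
      summable_geometric_of_lt_one (by positivity) (inv_lt_one_of_one_lt₀ ha)
  calc _ ≤ ∑' i : ℕ, ξ m ^ 2 * (x / m !) ^ 2 * r ^ (i + 1) :=
        (Summable.of_nonneg_of_le (fun i => by positivity) hbound (hgeo.mul_left _)).tsum_le_tsum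
          hbound (hgeo.mul_left _)
    _ = _ := by rw [tsum_mul_left, tsum_inv_pow_succ ha, ← div_eq_mul_inv]

lemma le_four_mul_tsum_sq_mul_sin_sq_s (hξ : Antitone ξ) (hξ0 : ∀ k, 0 ≤ ξ k) (n : ℕ) :
    3 * ((n : ℝ) - 4) * ξ (n + 1) ^ 2
      ≤ 4 * ∑' k : ℕ, ξ k ^ 2 * sin (s n * π / (k + 1)!) ^ 2 := by
  set f := fun k : ℕ => ξ k ^ 2 * sin (s n * π / (k + 1)!) ^ 2
  have hf : Summable f := summable_sq_mul_sin_sq_div_factorial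
    (fun k => pow_le_pow_left₀ (hξ0 k) (hξ (zero_le k)) 2) _
  have hterm : ∀ k ∈ Icc 5 n, 3 / 4 * ξ (n + 1) ^ 2 ≤ f k := by
    intro k hk
    rw [mem_Icc] at hk
    obtain ⟨p, rfl⟩ : ∃ p, k = p + 1 := ⟨k - 1, by omega⟩
    rw [mul_comm]
    exact mul_le_mul (pow_le_pow_left₀ (hξ0 _) (hξ (by omega)) 2)
      (three_quarters_le_sin_sq_s_div_factorial (by omega) (by omega)) (by norm_num)
      (sq_nonneg _)
  have hcard : (n : ℝ) - 4 ≤ #(Icc 5 n) := by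
    rw [Nat.card_Icc]
    have : n ≤ n + 1 - 5 + 4 := by omega
    have : (n : ℝ) ≤ ((n + 1 - 5 : ℕ) : ℝ) + 4 := mod_cast this
    linarith
  calc 3 * ((n : ℝ) - 4) * ξ (n + 1) ^ 2 ≤ 4 * (#(Icc 5 n) • (3 / 4 * ξ (n + 1) ^ 2)) := by
        rw [nsmul_eq_mul]; nlinarith [sq_nonneg (ξ (n + 1))]
    _ ≤ 4 * ∑ k ∈ Icc 5 n, f k := by gcongr; exact card_nsmul_le_sum _ _ _ hterm
    _ ≤ 4 * ∑' k, f k := by gcongr; exact hf.sum_le_tsum _ fun k _ => by positivity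

lemma sum_range_sq_mul_sin_sq_le (hξ : Antitone ξ) (hξ0 : ∀ k, 0 ≤ ξ k) (x : ℕ → ℝ)
    (N : ℕ) :
    ∑ k ∈ range N, ξ k ^ 2 * sin (x k) ^ 2 ≤ N * ξ 0 ^ 2 := by
  calc _ ≤ ∑ k ∈ range N, ξ 0 ^ 2 := sum_le_sum fun k _ =>
        (mul_le_of_le_one_right (sq_nonneg _) (sin_sq_le_one _)).trans
          (pow_le_pow_left₀ (hξ0 k) (hξ (zero_le k)) 2)
    _ = _ := by simp

lemma four_mul_tsum_tail_sq_mul_sin_sq_s_lt (hξ : Antitone ξ) (hpos : ∀ k, 0 < ξ k) {n : ℕ}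
    (hn : 1 ≤ n) :
    4 * ∑' i : ℕ, ξ (i + (n + 2)) ^ 2 * sin (s n * π / (i + (n + 2) + 1)!) ^ 2
      < π ^ 2 * ξ (n + 2) ^ 2 / (((n : ℝ) + 3) ^ 2 - 1) := by
  have htail := tsum_sq_mul_sin_sq_div_factorial_tail_le hξ (fun k => (hpos k).le) (s n * π)
    (m := n + 2) (by omega)
  push_cast at htail
  rw [show (n : ℝ) + 3 = n + 2 + 1 by ring]
  have hF : (0 : ℝ) < (n + 2)! := mod_cast factorial_pos _
  have hs : (0 : ℝ) ≤ s n := mod_cast s_nonneg n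
  have hs' : 2 * (s n : ℝ) < (n + 2)! := mod_cast two_mul_s_lt_factorial hn
  have hangle : (s n * π / (n + 2)! : ℝ) ^ 2 < π ^ 2 / 4 := by
    have h₁ : (s n * π / (n + 2)! : ℝ) < π / 2 := by rw [div_lt_iff₀ hF]; nlinarith [pi_pos]
    calc _ < (π / 2) ^ 2 := pow_lt_pow_left₀ h₁ (by positivity) two_ne_zero
      _ = π ^ 2 / 4 := by ring
  have hd : 0 < ((n : ℝ) + 2 + 1) ^ 2 - 1 := by nlinarith [(Nat.cast_nonneg n : (0 : ℝ) ≤ n)]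
  calc _ ≤ 4 * (ξ (n + 2) ^ 2 * (s n * π / (n + 2)! : ℝ) ^ 2
              / (((n : ℝ) + 2 + 1) ^ 2 - 1)) := by gcongr
    _ < _ := by
      rw [← mul_div_assoc, div_lt_div_iff_of_pos_right hd]
      nlinarith [mul_lt_mul_of_pos_left hangle (pow_pos (hpos (n + 2)) 2)]

lemma four_mul_tsum_sq_mul_sin_sq_s_lt (hξ : Antitone ξ) (hpos : ∀ k, 0 < ξ k) {n : ℕ}
    (hn : 1 ≤ n) :
    4 * ∑' k : ℕ, ξ k ^ 2 * sin (s n * π / (k + 1)!) ^ 2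
      < 4 * ((n : ℝ) + 2) * ξ 0 ^ 2 + π ^ 2 * ξ (n + 2) ^ 2 / (((n : ℝ) + 3) ^ 2 - 1) := by
  have hf := summable_sq_mul_sin_sq_div_factorial
    (fun k => pow_le_pow_left₀ (hpos k).le (hξ (zero_le k)) 2) (s n * π)
  have hhead := sum_range_sq_mul_sin_sq_le hξ (fun k => (hpos k).le)
    (fun k => s n * π / (k + 1)!) (n + 2)
  have htail := four_mul_tsum_tail_sq_mul_sin_sq_s_lt hξ hpos hn
  push_cast at hhead
  rw [← hf.sum_add_tsum_nat_add (n + 2)]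
  linarith

end

/-- Here `ξ k` stands for the paper's `ξ_{k+1}`: the sum over `k : ℕ` is the paper's sum over
`k ≥ 1`, and `ξ 0` is `ξ₁`. -/
theorem stmt_16 (ξ : ℕ → ℝ) (hpos : ∀ k, 0 < ξ k) (hdec : ∀ k, ξ (k + 1) ≤ ξ k) :
    (∀ n : ℕ, 8 ≤ n →
      3 * ((n : ℝ) - 7) * ξ (n + 1) ^ 2
          ≤ 4 * ∑' k : ℕ, (ξ k) ^ 2 * Real.sin ((s n : ℝ) * π / ((k + 1)! : ℝ)) ^ 2 ∧
      4 * ∑' k : ℕ, (ξ k) ^ 2 * Real.sin ((s n : ℝ) * π / ((k + 1)! : ℝ)) ^ 2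
          < 4 * ((n : ℝ) + 2) * (ξ 0) ^ 2
              + π ^ 2 * ξ (n + 2) ^ 2 / (((n : ℝ) + 3) ^ 2 - 1)) ∧
    ((∀ k, ξ k = 1) →
      Filter.Tendsto (fun n : ℕ => 4 * ∑' k : ℕ, Real.sin ((s n : ℝ) * π / ((k + 1)! : ℝ)) ^ 2)
        Filter.atTop Filter.atTop) := by
  have hξ : Antitone ξ := antitone_nat_of_succ_le hdec
  refine ⟨fun n hn => ⟨?_, four_mul_tsum_sq_mul_sin_sq_s_lt hξ hpos (by omega)⟩,
    fun _ => ?_⟩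
  · calc 3 * ((n : ℝ) - 7) * ξ (n + 1) ^ 2 ≤ 3 * ((n : ℝ) - 4) * ξ (n + 1) ^ 2 := by
          gcongr; norm_num
      _ ≤ _ := le_four_mul_tsum_sq_mul_sin_sq_s hξ (fun k => (hpos k).le) n
  · have hlower :=
      le_four_mul_tsum_sq_mul_sin_sq_s (ξ := fun _ => 1) antitone_const fun _ => zero_le_one
    refine Filter.tendsto_atTop_mono (fun n => by simpa using hlower n) ?_
    exact (Filter.tendsto_atTop_add_const_right _ _ tendsto_natCast_atTop_atTop).const_mul_atTop
      three_pos
end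

section
/- Let 0 < θ < 2π, ξ > 0, f = (ξ, 0), v = ξ(1 − cos θ, −sin θ), R x = L_θ x + v, and T = (Id + R)/2. Then for every x ∈ ℝ² and n ∈ ℕ, Tⁿ x = f + cosⁿ(θ/2)·L_{nθ/2}(x − f); hence ‖Tⁿ x − f‖ = cosⁿ(θ/2)·‖x − f‖ and Tⁿ x → f with linear rate cos(θ/2). -/
/-!
Since `v = f - L_θ f`, the map `R` is the rotation by `θ` about `f`, so
`T y - f = ½ (I + L_θ) (y - f)`. The half-angle formulas turn `½ (I + L_θ)` into
`cos (θ/2) • L_{θ/2}`, and since rotations compose additively, `n` steps give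
`cos (θ/2)ⁿ • L_{nθ/2}`. Rotations are isometries and `|cos (θ/2)| < 1`, so the distance to `f`
contracts geometrically.
-/

open Real

/-- The 2×2 rotation matrix by angle θ. -/
noncomputable def L (θ : ℝ) : Matrix (Fin 2) (Fin 2) ℝ :=
  !![Real.cos θ, -Real.sin θ; Real.sin θ, Real.cos θ]

/-- View a plain vector in `Fin 2 → ℝ` as an element of the Euclidean plane. -/
def toE (x : Fin 2 → ℝ) : EuclideanSpace ℝ (Fin 2) := WithLp.toLp 2 x

/-- Matrix–vector multiplication on the Euclidean plane. -/
noncomputable def mulVecE (M : Matrix (Fin 2) (Fin 2) ℝ) (x : EuclideanSpace ℝ (Fin 2)) :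
    EuclideanSpace ℝ (Fin 2) := WithLp.toLp 2 (M.mulVec x)

lemma mulVecE_eq_toLpLin (M : Matrix (Fin 2) (Fin 2) ℝ) (x : EuclideanSpace ℝ (Fin 2)) :
    mulVecE M x = Matrix.toLpLin 2 2 M x := rfl

lemma mulVecE_mulVecE (A B : Matrix (Fin 2) (Fin 2) ℝ) (x : EuclideanSpace ℝ (Fin 2)) :
    mulVecE A (mulVecE B x) = mulVecE (A * B) x := by
  simp only [mulVecE_eq_toLpLin, Matrix.toLpLin_mul_same, LinearMap.comp_apply]

lemma mulVecE_sub (M : Matrix (Fin 2) (Fin 2) ℝ) (x y : EuclideanSpace ℝ (Fin 2)) :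
    mulVecE M (x - y) = mulVecE M x - mulVecE M y := by
  simp only [mulVecE_eq_toLpLin, map_sub]

lemma mulVecE_smul (M : Matrix (Fin 2) (Fin 2) ℝ) (c : ℝ) (x : EuclideanSpace ℝ (Fin 2)) :
    mulVecE M (c • x) = c • mulVecE M x := by
  simp only [mulVecE_eq_toLpLin, map_smul]

lemma smul_mulVecE (M : Matrix (Fin 2) (Fin 2) ℝ) (c : ℝ) (x : EuclideanSpace ℝ (Fin 2)) :
    mulVecE (c • M) x = c • mulVecE M x := by
  simp only [mulVecE_eq_toLpLin, map_smul, LinearMap.smul_apply]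

lemma add_mulVecE (A B : Matrix (Fin 2) (Fin 2) ℝ) (x : EuclideanSpace ℝ (Fin 2)) :
    mulVecE (A + B) x = mulVecE A x + mulVecE B x := by
  simp only [mulVecE_eq_toLpLin, map_add, LinearMap.add_apply]

lemma one_mulVecE (x : EuclideanSpace ℝ (Fin 2)) : mulVecE 1 x = x := by
  simp [mulVecE_eq_toLpLin]

lemma L_mul_L (a b : ℝ) : L a * L b = L (a + b) := by
  ext i j
  fin_cases i <;> fin_cases j <;> simp [L, cos_add, sin_add] <;> ring

lemma L_zero : L 0 = 1 := by
  simp [L, Matrix.one_fin_two]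

lemma half_smul_one_add_L_two_mul (φ : ℝ) : (1 / 2 : ℝ) • (1 + L (2 * φ)) = cos φ • L φ := by
  ext i j
  fin_cases i <;> fin_cases j <;> simp [L, cos_two_mul, sin_two_mul] <;> ring

lemma norm_mulVecE_L (a : ℝ) (x : EuclideanSpace ℝ (Fin 2)) : ‖mulVecE (L a) x‖ = ‖x‖ := by
  simp only [EuclideanSpace.norm_eq, Fin.sum_univ_two]
  congr 1
  simp [mulVecE, L, dotProduct, Fin.sum_univ_two]
  linear_combination (x 0 ^ 2 + x 1 ^ 2) * sin_sq_add_cos_sq a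

lemma toE_sub_mulVecE_L (θ ξ : ℝ) :
    toE ![ξ, 0] - mulVecE (L θ) (toE ![ξ, 0]) = ξ • toE ![1 - cos θ, -sin θ] := by
  ext i
  fin_cases i <;> simp [toE, mulVecE, L, mul_sub]

lemma iterate_eq_of_forall_eq_add_smul_mulVecE_L
    {T : EuclideanSpace ℝ (Fin 2) → EuclideanSpace ℝ (Fin 2)} {f : EuclideanSpace ℝ (Fin 2)}
    {c α : ℝ} (hT : ∀ y, T y = f + c • mulVecE (L α) (y - f)) (n : ℕ) (x : EuclideanSpace ℝ (Fin 2)) :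
    T^[n] x = f + c ^ n • mulVecE (L (n * α)) (x - f) := by
  induction n with
  | zero => simp [L_zero, one_mulVecE]
  | succ n ih =>
    rw [Function.iterate_succ_apply', ih, hT, add_sub_cancel_left, mulVecE_smul, mulVecE_mulVecE,
      L_mul_L, smul_smul, ← pow_succ']
    congr 4
    push_cast
    ring

lemma abs_cos_half_lt_one {θ : ℝ} (h₀ : 0 < θ) (h₁ : θ < 2 * π) : |cos (θ / 2)| < 1 := by
  have hlt : cos (θ / 2) < cos 0 :=
    cos_lt_cos_of_nonneg_of_le_pi le_rfl (by linarith) (by linarith)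
  have hgt : cos π < cos (θ / 2) :=
    cos_lt_cos_of_nonneg_of_le_pi (by linarith) le_rfl (by linarith)
  rw [cos_zero] at hlt
  rw [cos_pi] at hgt
  exact abs_lt.2 ⟨hgt, hlt⟩

theorem stmt_18_general (θ ξ : ℝ) (hθ : 0 < θ) (hθ' : θ < 2 * π)
    (f v : EuclideanSpace ℝ (Fin 2))
    (hf : f = toE ![ξ, 0]) (hv : v = ξ • toE ![1 - Real.cos θ, -Real.sin θ])
    (R T : EuclideanSpace ℝ (Fin 2) → EuclideanSpace ℝ (Fin 2))
    (hR : ∀ x, R x = mulVecE (L θ) x + v)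
    (hT : ∀ x, T x = (1 / 2 : ℝ) • x + (1 / 2 : ℝ) • R x) :
    ∀ (x : EuclideanSpace ℝ (Fin 2)),
      (∀ n : ℕ, T^[n] x = f + (Real.cos (θ / 2)) ^ n • mulVecE (L (n * θ / 2)) (x - f)) ∧
      (∀ n : ℕ, ‖T^[n] x - f‖ = |Real.cos (θ / 2)| ^ n * ‖x - f‖) ∧
      Filter.Tendsto (fun n : ℕ => T^[n] x) Filter.atTop (nhds f) := by
  have hR_fix : ∀ y, R y = f + mulVecE (L θ) (y - f) := fun y => by
    rw [hR, hv, ← toE_sub_mulVecE_L, ← hf, mulVecE_sub]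
    abel
  have hT_step : ∀ y, T y = f + cos (θ / 2) • mulVecE (L (θ / 2)) (y - f) := fun y => by
    rw [← smul_mulVecE, ← half_smul_one_add_L_two_mul, smul_mulVecE, add_mulVecE, one_mulVecE,
      mul_div_cancel₀ θ two_ne_zero, hT, hR_fix]
    module
  intro x
  have hiter : ∀ n : ℕ, T^[n] x = f + cos (θ / 2) ^ n • mulVecE (L (n * θ / 2)) (x - f) :=
    fun n => by rw [iterate_eq_of_forall_eq_add_smul_mulVecE_L hT_step, mul_div_assoc]
  have hdist : ∀ n : ℕ, ‖T^[n] x - f‖ = |cos (θ / 2)| ^ n * ‖x - f‖ := fun n => by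
    rw [hiter, add_sub_cancel_left, norm_smul, norm_mulVecE_L, norm_pow, norm_eq_abs]
  refine ⟨hiter, hdist, ?_⟩
  rw [tendsto_iff_norm_sub_tendsto_zero]
  simp_rw [hdist]
  simpa using (tendsto_pow_atTop_nhds_zero_of_lt_one (abs_nonneg _)
    (abs_cos_half_lt_one hθ hθ')).mul_const ‖x - f‖

theorem stmt_18 (θ ξ : ℝ) (hθ : 0 < θ) (hθ' : θ < 2 * π) (hξ : 0 < ξ)
    (f v : EuclideanSpace ℝ (Fin 2))
    (hf : f = toE ![ξ, 0]) (hv : v = ξ • toE ![1 - Real.cos θ, -Real.sin θ])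
    (R T : EuclideanSpace ℝ (Fin 2) → EuclideanSpace ℝ (Fin 2))
    (hR : ∀ x, R x = mulVecE (L θ) x + v)
    (hT : ∀ x, T x = (1 / 2 : ℝ) • x + (1 / 2 : ℝ) • R x) :
    ∀ (x : EuclideanSpace ℝ (Fin 2)),
      (∀ n : ℕ, T^[n] x = f + (Real.cos (θ / 2)) ^ n • mulVecE (L (n * θ / 2)) (x - f)) ∧
      (∀ n : ℕ, ‖T^[n] x - f‖ = |Real.cos (θ / 2)| ^ n * ‖x - f‖) ∧
      Filter.Tendsto (fun n : ℕ => T^[n] x) Filter.atTop (nhds f) :=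
  stmt_18_general θ ξ hθ hθ' f v hf hv R T hR hT
end
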